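/- Let g ≥ 3 and let Ω be the alternating form of the permutation τ^{(g)}. Let α, β ∈ A ∖ {0,1} (i.e. α, β ∈ {2,3,5,6,…,3g−4,3g−3}) satisfy ⟨e_α, e_β⟩ = 0. Then T_{e_α + e_β}² belongs to the subgroup of GL(ℤ^A) generated by the transvections {T_{e_γ} : γ ∈ A}. -/

import Mathlib

open Matrix

def Aset (g : ℕ) : Finset ℕ :=
  {0, 1} ∪ (Finset.range (g - 1)).biUnion (fun k => {3 * k + 2, 3 * k + 3})

abbrev Idx (g : ℕ) := ↥(Aset g)

def evec (g : ℕ) (m : ℕ) : Idx g → ℤ := fun a => if (a : ℕ) = m then 1 else 0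

def pbtau (g : ℕ) (n : ℕ) : ℕ :=
  if n = 0 then 2 * g
  else if n = 1 then 2 * g - 1
  else if n % 3 = 0 then 2 * (n / 3) - 1
  else 2 * ((n - 2) / 3) + 2

def Om (g : ℕ) (pb : ℕ → ℕ) : Matrix (Idx g) (Idx g) ℤ := fun a b =>
  if (a : ℕ) < (b : ℕ) ∧ pb (b : ℕ) < pb (a : ℕ) then 1
  else if (b : ℕ) < (a : ℕ) ∧ pb (a : ℕ) < pb (b : ℕ) then -1
  else 0

lemma Om_skew (g : ℕ) (pb : ℕ → ℕ) : (Om g pb)ᵀ = -(Om g pb) := by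
  ext a b
  simp only [Matrix.transpose_apply, Matrix.neg_apply, Om]
  split_ifs <;> omega

def pairing {g : ℕ} (Ω : Matrix (Idx g) (Idx g) ℤ) (u v : Idx g → ℤ) : ℤ :=
  u ⬝ᵥ Ω.mulVec v

lemma pairing_add {g : ℕ} (Ω : Matrix (Idx g) (Idx g) ℤ) (v u w : Idx g → ℤ) :
    pairing Ω v (u + w) = pairing Ω v u + pairing Ω v w := by
  unfold pairing; rw [Matrix.mulVec_add, dotProduct_add]

lemma pairing_sub {g : ℕ} (Ω : Matrix (Idx g) (Idx g) ℤ) (v u w : Idx g → ℤ) :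
    pairing Ω v (u - w) = pairing Ω v u - pairing Ω v w := by
  unfold pairing; rw [Matrix.mulVec_sub, dotProduct_sub]

lemma pairing_smul {g : ℕ} (Ω : Matrix (Idx g) (Idx g) ℤ) (v : Idx g → ℤ) (c : ℤ)
    (u : Idx g → ℤ) : pairing Ω v (c • u) = c * pairing Ω v u := by
  unfold pairing; rw [Matrix.mulVec_smul, dotProduct_smul, smul_eq_mul]

lemma pairing_self_zero {g : ℕ} (Ω : Matrix (Idx g) (Idx g) ℤ) (hΩ : Ωᵀ = -Ω)
    (v : Idx g → ℤ) : pairing Ω v v = 0 := by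
  have key : pairing Ω v v = -pairing Ω v v := by
    calc pairing Ω v v = ∑ a, ∑ b, v a * (Ω a b * v b) := by
          simp [pairing, dotProduct, Matrix.mulVec, Finset.mul_sum]
    _ = ∑ a, ∑ b, -(v b * (Ω b a * v a)) := by
          refine Finset.sum_congr rfl fun a _ => Finset.sum_congr rfl fun b _ => ?_
          have h : Ω a b = -Ω b a := by
            have := congrFun (congrFun hΩ.symm a) b
            simp only [Matrix.transpose_apply, Matrix.neg_apply] at this
            omega
          rw [h]; ring
    _ = -∑ b, ∑ a, v b * (Ω b a * v a) := by
          rw [Finset.sum_comm]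
          simp
    _ = -pairing Ω v v := by
          simp [pairing, dotProduct, Matrix.mulVec, Finset.mul_sum]
  omega

def transvection {g : ℕ} (Ω : Matrix (Idx g) (Idx g) ℤ) (hΩ : Ωᵀ = -Ω) (v : Idx g → ℤ) :
    (Idx g → ℤ) ≃ₗ[ℤ] (Idx g → ℤ) where
  toFun u := u + pairing Ω v u • v
  invFun u := u - pairing Ω v u • v
  map_add' u w := by
    show (u + w) + pairing Ω v (u + w) • v = (u + pairing Ω v u • v) + (w + pairing Ω v w • v)
    rw [pairing_add, add_smul]; abel
  map_smul' c u := by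
    show c • u + pairing Ω v (c • u) • v = c • (u + pairing Ω v u • v)
    rw [pairing_smul, mul_smul, smul_add]
  left_inv u := by
    show (u + pairing Ω v u • v) - pairing Ω v (u + pairing Ω v u • v) • v = u
    rw [pairing_add, pairing_smul, pairing_self_zero Ω hΩ, mul_zero, add_zero,
      add_sub_cancel_right]
  right_inv u := by
    show (u - pairing Ω v u • v) + pairing Ω v (u - pairing Ω v u • v) • v = u
    rw [pairing_sub, pairing_smul, pairing_self_zero Ω hΩ, mul_zero, sub_zero,
      sub_add_cancel]

inductive OmegaClosure {M : Type*} [AddCommGroup M] (pair : M → M → ℤ) (V : Set M) : M → Prop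
  | base {v : M} : v ∈ V → OmegaClosure pair V v
  | neg {v : M} : OmegaClosure pair V v → OmegaClosure pair V (-v)
  | add {v w : M} : OmegaClosure pair V v → OmegaClosure pair V w → pair v w = 1 →
      OmegaClosure pair V (v + w)
  | sub {v w : M} : OmegaClosure pair V v → OmegaClosure pair V w → pair v w = 1 →
      OmegaClosure pair V (v - w)

/-- The alternating form of Zorich's permutation `τ^{(g)}`
(top row `0 1 2 3 5 6 … 3g-4 3g-3`, bottom row `3 2 6 5 9 8 … 3g-3 3g-4 1 0`). -/
def OmTau (g : ℕ) : Matrix (Idx g) (Idx g) ℤ := Om g (pbtau g)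

lemma OmTau_skew (g : ℕ) : (OmTau g)ᵀ = -(OmTau g) := Om_skew g (pbtau g)

/-- `v* = e_0 + Σ_{k=0}^{g-2} (-e_{3k+2} + e_{3k+3})`. -/
def vstar (g : ℕ) : Idx g → ℤ :=
  evec g 0 + ∑ k ∈ Finset.range (g - 1), (-evec g (3 * k + 2) + evec g (3 * k + 3))

/-- `w* = e_1 + Σ_{k=0}^{g-2} (-e_{3k+2} + e_{3k+3})`. -/
def wstar (g : ℕ) : Idx g → ℤ :=
  evec g 1 + ∑ k ∈ Finset.range (g - 1), (-evec g (3 * k + 2) + evec g (3 * k + 3))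

/-- The symplectic transvection along `v` for the form of `τ^{(g)}`. -/
def Ttau (g : ℕ) (v : Idx g → ℤ) : (Idx g → ℤ) ≃ₗ[ℤ] (Idx g → ℤ) :=
  transvection (OmTau g) (OmTau_skew g) v


section AuxLemmas

open Matrix

lemma pairing_skew {g : ℕ} (Ω : Matrix (Idx g) (Idx g) ℤ) (hΩ : Ωᵀ = -Ω)
    (v u : Idx g → ℤ) : pairing Ω v u = -pairing Ω u v := by
  unfold pairing
  rw [Matrix.dotProduct_mulVec, ← Matrix.mulVec_transpose, hΩ, Matrix.neg_mulVec,
    neg_dotProduct, dotProduct_comm]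

lemma pairing_add_left {g : ℕ} (Ω : Matrix (Idx g) (Idx g) ℤ) (v w u : Idx g → ℤ) :
    pairing Ω (v + w) u = pairing Ω v u + pairing Ω w u := by
  unfold pairing; rw [add_dotProduct]

lemma pairing_sub_left {g : ℕ} (Ω : Matrix (Idx g) (Idx g) ℤ) (v w u : Idx g → ℤ) :
    pairing Ω (v - w) u = pairing Ω v u - pairing Ω w u := by
  unfold pairing; rw [sub_dotProduct]

lemma pairing_smul_left {g : ℕ} (Ω : Matrix (Idx g) (Idx g) ℤ) (c : ℤ) (v u : Idx g → ℤ) :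
    pairing Ω (c • v) u = c * pairing Ω v u := by
  unfold pairing; rw [smul_dotProduct, smul_eq_mul]

lemma evec_single {g : ℕ} (m : ℕ) (hm : m ∈ Aset g) :
    evec g m = Pi.single (⟨m, hm⟩ : Idx g) 1 := by
  funext a
  simp [evec, Pi.single_apply, Subtype.ext_iff]

lemma pairing_evec {g : ℕ} (Ω : Matrix (Idx g) (Idx g) ℤ) (m n : ℕ)
    (hm : m ∈ Aset g) (hn : n ∈ Aset g) :
    pairing Ω (evec g m) (evec g n) = Ω ⟨m, hm⟩ ⟨n, hn⟩ := by
  rw [evec_single m hm, evec_single n hn]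
  simp [pairing, Matrix.mulVec_single, single_dotProduct]

lemma zero_mem_Aset (g : ℕ) : 0 ∈ Aset g := by simp [Aset]

lemma pairing_e0 {g : ℕ} (hg : 3 ≤ g) (n : ℕ) (hn : n ∈ Aset g)
    (h0 : n ≠ 0) (h1 : n ≠ 1) :
    pairing (OmTau g) (evec g 0) (evec g n) = 1 := by
  rw [pairing_evec (OmTau g) 0 n (zero_mem_Aset g) hn]
  have hk : ∃ k, k < g - 1 ∧ (n = 3 * k + 2 ∨ n = 3 * k + 3) := by
    simp only [Aset, Finset.mem_union, Finset.mem_insert, Finset.mem_singleton,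
      Finset.mem_biUnion, Finset.mem_range] at hn
    rcases hn with (h | h) | ⟨k, hk, h⟩
    · omega
    · omega
    · exact ⟨k, hk, h⟩
  obtain ⟨k, hkg, hcase⟩ := hk
  have hlt : pbtau g n < 2 * g := by
    unfold pbtau
    split_ifs <;> omega
  have hp0 : pbtau g 0 = 2 * g := by simp [pbtau]
  simp only [OmTau, Om]
  rw [if_pos]
  exact ⟨by omega, by rw [hp0]; exact hlt⟩

lemma lequiv_mul_apply {g : ℕ} (e f : (Idx g → ℤ) ≃ₗ[ℤ] (Idx g → ℤ)) (u : Idx g → ℤ) :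
    (e * f) u = e (f u) := rfl

lemma transvection_apply {g : ℕ} (Ω : Matrix (Idx g) (Idx g) ℤ) (hΩ : Ωᵀ = -Ω)
    (v u : Idx g → ℤ) : transvection Ω hΩ v u = u + pairing Ω v u • v := rfl

lemma transvection_inv_apply {g : ℕ} (Ω : Matrix (Idx g) (Idx g) ℤ) (hΩ : Ωᵀ = -Ω)
    (v u : Idx g → ℤ) : (transvection Ω hΩ v)⁻¹ u = u - pairing Ω v u • v := rfl

lemma transvection_conj {g : ℕ} (Ω : Matrix (Idx g) (Idx g) ℤ) (hΩ : Ωᵀ = -Ω)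
    (x v : Idx g → ℤ) :
    transvection Ω hΩ (v + pairing Ω x v • x) =
      transvection Ω hΩ x * transvection Ω hΩ v * (transvection Ω hΩ x)⁻¹ := by
  have hvx : pairing Ω v x = -pairing Ω x v := pairing_skew Ω hΩ v x
  refine LinearEquiv.ext fun u => ?_
  simp only [lequiv_mul_apply, transvection_apply, transvection_inv_apply,
    pairing_add, pairing_sub, pairing_smul, pairing_add_left, pairing_smul_left,
    pairing_self_zero Ω hΩ, hvx]
  funext i
  simp only [Pi.add_apply, Pi.sub_apply, Pi.smul_apply, smul_eq_mul]
  ring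

lemma transvection_key {g : ℕ} (Ω : Matrix (Idx g) (Idx g) ℤ) (hΩ : Ωᵀ = -Ω)
    (s c : Idx g → ℤ) (h : pairing Ω c s = 2) :
    (transvection Ω hΩ (s - c)) ^ 2 =
      ((transvection Ω hΩ c)⁻¹ * (transvection Ω hΩ s)⁻¹) ^ 2 := by
  have hsc : pairing Ω s c = -2 := by rw [pairing_skew Ω hΩ, h]
  refine LinearEquiv.ext fun u => ?_
  simp only [pow_two, lequiv_mul_apply, transvection_apply, transvection_inv_apply,
    pairing_add, pairing_sub, pairing_smul, pairing_sub_left, pairing_smul_left,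
    pairing_self_zero Ω hΩ, h, hsc]
  funext i
  simp only [Pi.add_apply, Pi.sub_apply, Pi.smul_apply, smul_eq_mul]
  ring

end AuxLemmas

/-- Lemma 3.3 of the paper: for `α, β ∈ A ∖ {0,1}` with `⟨e_α, e_β⟩ = 0`, the square
`T_{e_α + e_β}²` lies in the subgroup generated by the transvections along the standard
basis vectors. -/
theorem statement10 (g : ℕ) (hg : 3 ≤ g) (a b : Idx g)
    (ha0 : (a : ℕ) ≠ 0) (ha1 : (a : ℕ) ≠ 1) (hb0 : (b : ℕ) ≠ 0) (hb1 : (b : ℕ) ≠ 1)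
    (hab : pairing (OmTau g) (evec g (a : ℕ)) (evec g (b : ℕ)) = 0) :
    (Ttau g (evec g (a : ℕ) + evec g (b : ℕ))) ^ 2 ∈
      Subgroup.closure (Set.range fun c : Idx g => Ttau g (evec g (c : ℕ))) := by
  set Ω := OmTau g with hO
  have hΩ : Ωᵀ = -Ω := OmTau_skew g
  set E0 := evec g 0 with hE0
  set Ea := evec g (a : ℕ) with hEa
  set Eb := evec g (b : ℕ) with hEb
  set H := Subgroup.closure (Set.range fun c : Idx g => Ttau g (evec g (c : ℕ))) with hH
  have hTc : Ttau g E0 ∈ H := Subgroup.subset_closure ⟨⟨0, zero_mem_Aset g⟩, rfl⟩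
  have hTa : Ttau g Ea ∈ H := Subgroup.subset_closure ⟨a, rfl⟩
  have hTb : Ttau g Eb ∈ H := Subgroup.subset_closure ⟨b, rfl⟩
  have ha : pairing Ω E0 Ea = 1 := pairing_e0 hg (a : ℕ) a.2 ha0 ha1
  have hb : pairing Ω E0 Eb = 1 := pairing_e0 hg (b : ℕ) b.2 hb0 hb1
  have hT1 : Ttau g (Ea + E0) ∈ H := by
    have hc := transvection_conj Ω hΩ E0 Ea
    rw [ha, one_smul] at hc
    show transvection Ω hΩ (Ea + E0) ∈ H
    rw [hc]
    exact mul_mem (mul_mem hTc hTa) (inv_mem hTc)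
  have hpair2 : pairing Ω (Ea + E0) Eb = 1 := by
    rw [pairing_add_left, hab, hb]; norm_num
  have hTs : Ttau g (Eb + (Ea + E0)) ∈ H := by
    have hc := transvection_conj Ω hΩ (Ea + E0) Eb
    rw [hpair2, one_smul] at hc
    show transvection Ω hΩ (Eb + (Ea + E0)) ∈ H
    rw [hc]
    exact mul_mem (mul_mem hT1 hTb) (inv_mem hT1)
  have hcs : pairing Ω E0 (Eb + (Ea + E0)) = 2 := by
    rw [pairing_add, pairing_add, ha, hb, pairing_self_zero Ω hΩ]; norm_num
  have hz : Ea + Eb = (Eb + (Ea + E0)) - E0 := by abel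
  rw [hz]
  show transvection Ω hΩ ((Eb + (Ea + E0)) - E0) ^ 2 ∈ H
  rw [transvection_key Ω hΩ (Eb + (Ea + E0)) E0 hcs]
  exact pow_mem (mul_mem (inv_mem hTc) (inv_mem hTs)) 2
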